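/- If an expression e is well-typed with type σ under unrestricted context Γ extended with an unrestricted variable x:ω σ' (and linear context Δ), then e is also well-typed with type σ under Γ extended with x as a Δ-bound variable with empty usage environment (x:_∅ σ'), and conversely. -/

import Mathlib

/-! # Linear Core (λ^π_Δ): syntax and typing -/

abbrev Name := String

inductive Mult : Type
  | one | many | mvar (p : Name)
deriving DecidableEq

inductive Ty : Type
  | data (T : Name) (ms : List Mult)
  | arrow (a : Ty) (π : Mult) (b : Ty)
  | forallM (p : Name) (t : Ty)
  | tensor (a b : Ty)
  | unit
deriving DecidableEq

def Mult.msubst (m : Mult) (p : Name) (π : Mult) : Mult :=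
  match m with
  | .mvar q => if q = p then π else .mvar q
  | m => m

def Ty.msubst : Ty → Name → Mult → Ty
  | .data T ms, p, π => .data T (ms.map (Mult.msubst · p π))
  | .arrow a m b, p, π => .arrow (a.msubst p π) (m.msubst p π) (b.msubst p π)
  | .forallM q t, p, π => if q = p then .forallM q t else .forallM q (t.msubst p π)
  | .tensor a b, p, π => .tensor (a.msubst p π) (b.msubst p π)
  | .unit, _, _ => .unit

/-- An entry of the linear typing context: a (possibly irrelevant, possibly
tagged with a constructor name and linear-field index) linear resource. -/
structure LEntry : Type where
  name : Name
  ty : Ty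
  irr : Bool := false
  tag : Option (Name × Nat) := none
deriving DecidableEq

abbrev LCtx := List LEntry

/-- `[Δ]` : pointwise irrelevant lifting of a linear context. -/
def LCtx.irrelevant (Δ : LCtx) : LCtx := Δ.map fun en => { en with irr := true }

def LCtx.names (Δ : LCtx) : List Name := Δ.map LEntry.name

/-- `Δ[Δrep/x]` : replace the occurrences of `x` in `Δ` by `Δrep`. -/
def LCtx.substVar (Δ : LCtx) (x : Name) (Δrep : LCtx) : LCtx :=
  Δ.foldr (fun en acc => (if en.name = x then Δrep else [en]) ++ acc) []

/-- `u[x/Δ]` : collapse occurrences of the variables of `Δ` in `u` to `x`. -/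
def LCtx.collapse (u : LCtx) (Δ : LCtx) (x : Name) (σ : Ty) : LCtx :=
  if Δ.any (fun d => u.any (fun en => en.name == d.name)) then
    (u.filter (fun en => ! Δ.any (fun d => d.name == en.name))) ++ [⟨x, σ, false, none⟩]
  else u

def LCtx.removeNames (Δ : LCtx) (ns : List Name) : LCtx :=
  Δ.filter (fun en => ! ns.contains en.name)

/-- Flatten a list of linear contexts `Δ₁,…,Δₙ` into one. -/
def LCtx.flats (Δs : List LCtx) : LCtx := Δs.foldr (· ++ ·) []

/-- Entries of the unrestricted context Γ: unrestricted variables,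
Δ-bound variables (annotated with a usage environment) and multiplicity
variables. -/
inductive GEntry : Type
  | unr (x : Name) (σ : Ty)
  | dlt (x : Name) (Δ : LCtx) (σ : Ty)
  | mvar (p : Name)
deriving DecidableEq

abbrev GCtx := List GEntry

/-- `Γ[Δ/x]` : expand occurrences of `x` inside usage environments in `Γ`
into the linear variables of `Δ`. -/
def GCtx.expandVar (Γ : GCtx) (x : Name) (Δ : LCtx) : GCtx :=
  Γ.map fun g => match g with
    | .dlt y u σ => .dlt y (LCtx.substVar u x Δ) σ
    | g => g

/-- `Γ[x/Δ]` : collapse occurrences of the variables of `Δ` inside usage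
environments in `Γ` to the single variable `x`. -/
def GCtx.collapse (Γ : GCtx) (Δ : LCtx) (x : Name) (σx : Ty) : GCtx :=
  Γ.map fun g => match g with
    | .dlt y u σ => .dlt y (LCtx.collapse u Δ x σx) σ
    | g => g

/-- `Γ[·/Δs]_z` : delete the variables of `Δs` from the usage environment
of `z` in `Γ`. -/
def GCtx.zeroUsage (Γ : GCtx) (z : Name) (ns : List Name) : GCtx :=
  Γ.map fun g => match g with
    | .dlt y u σ => if y = z then .dlt y (LCtx.removeNames u ns) σ else .dlt y u σ
    | g => g

/-- Case patterns: wildcard, or a constructor pattern binding fields with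
their multiplicities and types. -/
inductive Pat : Type
  | wild
  | con (K : Name) (fields : List (Name × Mult × Ty))

inductive Expr : Type
  | var (x : Name)
  | con (K : Name) (args : List (Mult × Expr))
  | lam (x : Name) (π : Mult) (σ : Ty) (body : Expr)
  | app (f a : Expr)
  | mlam (p : Name) (body : Expr)
  | mapp (f : Expr) (π : Mult)
  | lett (x : Name) (Δ : LCtx) (σ : Ty) (rhs body : Expr)
  | letrec (binds : List (Name × LCtx × Ty × Expr)) (body : Expr)
  | cse (scrut : Expr) (z : Name) (Δz : LCtx) (σ : Ty) (alts : List (Pat × Expr))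
  | pair (a b : Expr)
  | unit

mutual
/-- Capture-avoiding-enough substitution `e[e'/x]` (stops under shadowing binders). -/
def Expr.subst : Expr → Name → Expr → Expr
  | .var y, x, e' => if y = x then e' else .var y
  | .con K args, x, e' => .con K (substArgs args x e')
  | .lam y π σ b, x, e' => if y = x then .lam y π σ b else .lam y π σ (b.subst x e')
  | .app f a, x, e' => .app (f.subst x e') (a.subst x e')
  | .mlam p b, x, e' => .mlam p (b.subst x e')
  | .mapp f π, x, e' => .mapp (f.subst x e') π
  | .lett y Δ σ r b, x, e' =>
      .lett y Δ σ (r.subst x e') (if y = x then b else b.subst x e')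
  | .letrec binds b, x, e' => .letrec (substBinds binds x e') (b.subst x e')
  | .cse s z Δz σ alts, x, e' =>
      .cse (s.subst x e') z Δz σ (if z = x then alts else substAlts alts x e')
  | .pair a b, x, e' => .pair (a.subst x e') (b.subst x e')
  | .unit, _, _ => .unit

def substArgs : List (Mult × Expr) → Name → Expr → List (Mult × Expr)
  | [], _, _ => []
  | (m, e) :: rest, x, e' => (m, e.subst x e') :: substArgs rest x e'

def substBinds : List (Name × LCtx × Ty × Expr) → Name → Expr → List (Name × LCtx × Ty × Expr)
  | [], _, _ => []
  | (y, Δ, σ, e) :: rest, x, e' => (y, Δ, σ, e.subst x e') :: substBinds rest x e'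

def substAlts : List (Pat × Expr) → Name → Expr → List (Pat × Expr)
  | [], _, _ => []
  | (ρ, e) :: rest, x, e' => (ρ, e.subst x e') :: substAlts rest x e'
end

/-- Iterated substitution. -/
def Expr.substList (e : Expr) (ss : List (Name × Expr)) : Expr :=
  ss.foldl (fun acc s => Expr.subst acc s.1 s.2) e

mutual
/-- Multiplicity substitution `e[π/p]`. -/
def Expr.msubst : Expr → Name → Mult → Expr
  | .var y, _, _ => .var y
  | .con K args, p, π => .con K (msubstArgs args p π)
  | .lam y m σ b, p, π => .lam y (m.msubst p π) (σ.msubst p π) (b.msubst p π)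
  | .app f a, p, π => .app (f.msubst p π) (a.msubst p π)
  | .mlam q b, p, π => if q = p then .mlam q b else .mlam q (b.msubst p π)
  | .mapp f m, p, π => .mapp (f.msubst p π) (m.msubst p π)
  | .lett y Δ σ r b, p, π => .lett y Δ (σ.msubst p π) (r.msubst p π) (b.msubst p π)
  | .letrec binds b, p, π => .letrec (msubstBinds binds p π) (b.msubst p π)
  | .cse s z Δz σ alts, p, π => .cse (s.msubst p π) z Δz (σ.msubst p π) (msubstAlts alts p π)
  | .pair a b, p, π => .pair (a.msubst p π) (b.msubst p π)
  | .unit, _, _ => .unit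

def msubstArgs : List (Mult × Expr) → Name → Mult → List (Mult × Expr)
  | [], _, _ => []
  | (m, e) :: rest, p, π => (m.msubst p π, e.msubst p π) :: msubstArgs rest p π

def msubstBinds : List (Name × LCtx × Ty × Expr) → Name → Mult → List (Name × LCtx × Ty × Expr)
  | [], _, _ => []
  | (y, Δ, σ, e) :: rest, p, π => (y, Δ, σ.msubst p π, e.msubst p π) :: msubstBinds rest p π

def msubstAlts : List (Pat × Expr) → Name → Mult → List (Pat × Expr)
  | [], _, _ => []
  | (ρ, e) :: rest, p, π => (ρ, e.msubst p π) :: msubstAlts rest p π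
end

mutual
/-- Free variables of an expression. -/
def Expr.fv : Expr → List Name
  | .var x => [x]
  | .con _ args => fvArgs args
  | .lam x _ _ b => b.fv.filter (fun n => n ≠ x)
  | .app f a => f.fv ++ a.fv
  | .mlam _ b => b.fv
  | .mapp f _ => f.fv
  | .lett x _ _ r b => r.fv ++ b.fv.filter (fun n => n ≠ x)
  | .letrec binds b => fvBinds binds ++ b.fv
  | .cse s z _ _ alts => s.fv ++ (fvAlts alts).filter (fun n => n ≠ z)
  | .pair a b => a.fv ++ b.fv
  | .unit => []

def fvArgs : List (Mult × Expr) → List Name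
  | [] => []
  | (_, e) :: rest => e.fv ++ fvArgs rest

def fvBinds : List (Name × LCtx × Ty × Expr) → List Name
  | [] => []
  | (_, _, _, e) :: rest => e.fv ++ fvBinds rest

def fvAlts : List (Pat × Expr) → List Name
  | [] => []
  | (_, e) :: rest => e.fv ++ fvAlts rest
end

/-- Weak head normal forms. -/
def Expr.isWHNF : Expr → Prop
  | .lam _ _ _ _ => True
  | .mlam _ _ => True
  | .con _ _ => True
  | .pair _ _ => True
  | .unit => True
  | _ => False

/-- Does a pattern match a (WHNF) expression? -/
def Pat.matchesE : Pat → Expr → Prop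
  | .wild, _ => True
  | .con K fs, .con K' args => K = K' ∧ fs.length = args.length
  | .con _ _, _ => False

/-- Well-formedness of multiplicities: `1`, `ω`, or an in-scope multiplicity variable. -/
inductive MultWF : GCtx → Mult → Prop
  | one {Γ} : MultWF Γ .one
  | many {Γ} : MultWF Γ .many
  | mvar {Γ p} : GEntry.mvar p ∈ Γ → MultWF Γ (.mvar p)

/-- The mode of the case-alternative judgement: scrutinee in WHNF (⇒_WHNF)
or not in WHNF (⇒_NWHNF). Mode-agnostic rules are stated for both modes. -/
inductive AltMode : Type
  | whnf | nwhnf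
deriving DecidableEq

def Pat.linFieldsCount : Pat → Nat
  | .wild => 0
  | .con _ fs => (fs.filter fun f => f.2.1 == Mult.one).length

mutual
/-- The typing judgement `Γ; Δ ⊢ e : σ` of Linear Core. -/
inductive Typed : GCtx → LCtx → Expr → Ty → Prop
  | var1 (Γ : GCtx) (x : Name) (σ : Ty) :
      Typed Γ [⟨x, σ, false, none⟩] (.var x) σ
  | varw {Γ x σ} : GEntry.unr x σ ∈ Γ → Typed Γ [] (.var x) σ
  | vard {Γ x Δ σ} : GEntry.dlt x Δ σ ∈ Γ → Typed Γ Δ (.var x) σ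
  | split {Γ : GCtx} {Δ₁ Δ₂ : LCtx} {e σ} (en : LEntry) (K : Name) (n : Nat) :
      en.tag = none →
      Typed Γ (Δ₁ ++ ((List.range n).map fun i => { en with tag := some (K, i) }) ++ Δ₂) e σ →
      Typed Γ (Δ₁ ++ en :: Δ₂) e σ
  | lamI1 {Γ Δ x σ e φ} :
      Typed Γ (Δ ++ [⟨x, σ, false, none⟩]) e φ →
      Typed Γ Δ (.lam x .one σ e) (.arrow σ .one φ)
  | lamIw {Γ Δ x σ e φ} :
      Typed (Γ ++ [.unr x σ]) Δ e φ →
      Typed Γ Δ (.lam x .many σ e) (.arrow σ .many φ)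
  | lamIp {Γ Δ x σ e φ p} :
      Typed Γ (Δ ++ [⟨x, σ, false, none⟩]) e φ →
      Typed Γ Δ (.lam x (.mvar p) σ e) (.arrow σ (.mvar p) φ)
  | appE1 {Γ Δ₁ Δ₂ e e' σ φ} :
      Typed Γ Δ₁ e (.arrow σ .one φ) → Typed Γ Δ₂ e' σ →
      Typed Γ (Δ₁ ++ Δ₂) (.app e e') φ
  | appEw {Γ Δ e e' σ φ} :
      Typed Γ Δ e (.arrow σ .many φ) → Typed Γ [] e' σ →
      Typed Γ Δ (.app e e') φ
  | appEp {Γ Δ₁ Δ₂ e e' σ φ p} :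
      Typed Γ Δ₁ e (.arrow σ (.mvar p) φ) → Typed Γ Δ₂ e' σ →
      Typed Γ (Δ₁ ++ Δ₂) (.app e e') φ
  | mlamI {Γ Δ p e σ} :
      Typed (Γ ++ [.mvar p]) Δ e σ →
      Typed Γ Δ (.mlam p e) (.forallM p σ)
  | mappE {Γ Δ p e σ π} :
      Typed Γ Δ e (.forallM p σ) → MultWF Γ π →
      Typed Γ Δ (.mapp e π) (Ty.msubst σ p π)
  | unitI {Γ} : Typed Γ [] .unit .unit
  | pairI {Γ Δ₁ Δ₂ a b σ τ} :
      Typed Γ Δ₁ a σ → Typed Γ Δ₂ b τ →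
      Typed Γ (Δ₁ ++ Δ₂) (.pair a b) (.tensor σ τ)
  | lett {Γ Δ Δ' x σ e e' φ} :
      Typed Γ Δ e σ →
      Typed (Γ ++ [.dlt x Δ σ]) (Δ ++ Δ') e' φ →
      Typed Γ (Δ ++ Δ') (.lett x Δ σ e e') φ
  | letrec {Γ : GCtx} {Δ Δ' : LCtx} {binds : List (Name × LCtx × Ty × Expr)} {e' φ} :
      (∀ b ∈ binds, b.2.1 = Δ) →
      (∀ b ∈ binds,
        Typed (Γ ++ binds.map fun bi => GEntry.dlt bi.1 bi.2.1 bi.2.2.1) Δ b.2.2.2 b.2.2.1) →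
      Typed (Γ ++ binds.map fun bi => GEntry.dlt bi.1 bi.2.1 bi.2.2.1) (Δ ++ Δ') e' φ →
      Typed Γ (Δ ++ Δ') (.letrec binds e') φ
  | caseWHNF {Γ : GCtx} {Δ Δ' : LCtx} {e z σ φ alts} (Δs : List LCtx) :
      Expr.isWHNF e →
      TypedWHNF Γ Δ e σ Δs →
      (∀ a ∈ alts, Pat.matchesE a.1 e →
        TypedAlt (Γ ++ [GEntry.dlt z Δ σ]) (Δ ++ Δ') a.1 a.2 z Δs σ φ .whnf) →
      (∀ a ∈ alts, ¬ Pat.matchesE a.1 e →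
        TypedAlt (Γ ++ [GEntry.dlt z (LCtx.irrelevant Δ) σ])
          (LCtx.irrelevant Δ ++ Δ') a.1 a.2 z [LCtx.irrelevant Δ] σ φ .nwhnf) →
      Typed Γ (Δ ++ Δ') (.cse e z Δ σ alts) φ
  | caseNWHNF {Γ : GCtx} {Δ Δ' : LCtx} {e z σ φ alts} :
      ¬ Expr.isWHNF e →
      Typed Γ Δ e σ →
      (∀ a ∈ alts,
        TypedAlt (Γ ++ [GEntry.dlt z (LCtx.irrelevant Δ) σ])
          (LCtx.irrelevant Δ ++ Δ') a.1 a.2 z [LCtx.irrelevant Δ] σ φ .nwhnf) →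
      Typed Γ (LCtx.irrelevant Δ ++ Δ') (.cse e z (LCtx.irrelevant Δ) σ alts) φ

/-- The WHNF typing judgement `Γ; Δ ⊩ e : σ ▷ Δ̄`, splitting the linear
resources among the sub-expressions of an expression in WHNF. -/
inductive TypedWHNF : GCtx → LCtx → Expr → Ty → List LCtx → Prop
  | lam {Γ Δ x π σ e τ} :
      Typed Γ Δ (.lam x π σ e) τ → TypedWHNF Γ Δ (.lam x π σ e) τ [Δ]
  | con {Γ K args τ Δs} :
      ArgsTyped Γ args Δs →
      TypedWHNF Γ (LCtx.flats Δs) (.con K args) τ Δs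

/-- Typing of constructor arguments: unrestricted arguments need the empty
linear context, each linear argument gets its own `Δᵢ`. -/
inductive ArgsTyped : GCtx → List (Mult × Expr) → List LCtx → Prop
  | nil {Γ} : ArgsTyped Γ [] []
  | unr {Γ e σ args Δs} :
      Typed Γ [] e σ → ArgsTyped Γ args Δs → ArgsTyped Γ ((.many, e) :: args) Δs
  | lin {Γ Δ e σ args Δs} :
      Typed Γ Δ e σ → ArgsTyped Γ args Δs → ArgsTyped Γ ((.one, e) :: args) (Δ :: Δs)

/-- The case-alternative judgement `Γ; Δ ⊢ ρ ⇒ e :^z_{Δ̄} σ ⇒ φ` of Linear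
Core (the `Δ̄ : List LCtx` is the annotated scrutinee environment: the split
`Δ₁,…,Δₙ` in WHNF mode, the singleton `[[Δ]]` in non-WHNF mode). -/
inductive TypedAlt : GCtx → LCtx → Pat → Expr → Name → List LCtx → Ty → Ty → AltMode → Prop
  | wild {Γ Δ e z Δs σ φ m} :
      Typed Γ Δ e φ →
      TypedAlt Γ Δ .wild e z Δs σ φ m
  | alt0 {Γ Δ e z Δs σ φ m K fields} :
      (∀ f ∈ fields, f.2.1 = Mult.many) →
      Typed ((GCtx.zeroUsage Γ z (LCtx.names (LCtx.flats Δs)))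
               ++ fields.map fun f => GEntry.unr f.1 f.2.2)
            (LCtx.removeNames Δ (LCtx.names (LCtx.flats Δs))) e φ →
      TypedAlt Γ Δ (.con K fields) e z Δs σ φ m
  | altNwhnf {Γ Δ e z Δs σ φ K fields} :
      0 < (fields.filter fun f => f.2.1 == Mult.one).length →
      (fields.filter fun f => f.2.1 == Mult.one).length = Δs.length →
      Typed (Γ ++ (fields.filter fun f => f.2.1 == Mult.many).map (fun f => GEntry.unr f.1 f.2.2)
               ++ (List.zip (fields.filter fun f => f.2.1 == Mult.one) Δs).map
                    (fun fd => GEntry.dlt fd.1.1 fd.2 fd.1.2.2))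
            Δ e φ →
      TypedAlt Γ Δ (.con K fields) e z Δs σ φ .whnf
  | altNnwhnf {Γ Δ e z Δs σ φ K fields} :
      0 < (fields.filter fun f => f.2.1 == Mult.one).length →
      Typed (Γ ++ (fields.filter fun f => f.2.1 == Mult.many).map (fun f => GEntry.unr f.1 f.2.2)
               ++ (((fields.filter fun f => f.2.1 == Mult.one).zipIdx).map Prod.swap).map
                    (fun fi => GEntry.dlt fi.2.1
                       ((LCtx.flats Δs).map fun en => { en with tag := some (K, fi.1) })
                       fi.2.2.2))
            Δ e φ →
      TypedAlt Γ Δ (.con K fields) e z Δs σ φ .nwhnf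
end



/-! ## Auxiliary machinery for STATEMENT 0 -/

def GRel (x : Name) (σ' : Ty) (g g' : GEntry) : Prop :=
  g = g' ∨ (g = .unr x σ' ∧ g' = .dlt x [] σ') ∨ (g = .dlt x [] σ' ∧ g' = .unr x σ')

theorem rel_refl_list (x : Name) (σ' : Ty) : ∀ L : GCtx, List.Forall₂ (GRel x σ') L L
  | [] => .nil
  | _ :: L => .cons (Or.inl rfl) (rel_refl_list x σ' L)

theorem rel_append {x σ'} {Γ Γ' : GCtx} (h : List.Forall₂ (GRel x σ') Γ Γ') (L : GCtx) :
    List.Forall₂ (GRel x σ') (Γ ++ L) (Γ' ++ L) :=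
  List.rel_append h (rel_refl_list x σ' L)

theorem rel_mem {x σ'} {Γ Γ' : GCtx} (h : List.Forall₂ (GRel x σ') Γ Γ') {g : GEntry}
    (hg : g ∈ Γ) : ∃ g', g' ∈ Γ' ∧ GRel x σ' g g' := by
  induction h with
  | nil => cases hg
  | cons r _ ih =>
    rcases List.mem_cons.mp hg with rfl | hg
    · exact ⟨_, List.mem_cons_self, r⟩
    · obtain ⟨g', hg', hr⟩ := ih hg
      exact ⟨g', List.mem_cons_of_mem _ hg', hr⟩

theorem multwf_rel {x σ'} {Γ Γ' : GCtx} (h : List.Forall₂ (GRel x σ') Γ Γ') {π : Mult}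
    (hw : MultWF Γ π) : MultWF Γ' π := by
  cases hw with
  | one => exact .one
  | many => exact .many
  | mvar hm =>
    obtain ⟨g', hg', hr⟩ := rel_mem h hm
    rcases hr with rfl | ⟨h1, _⟩ | ⟨h1, _⟩
    · exact .mvar hg'
    · cases h1
    · cases h1

theorem zeroUsage_rel {x σ'} {Γ Γ' : GCtx} (h : List.Forall₂ (GRel x σ') Γ Γ')
    (z : Name) (ns : List Name) :
    List.Forall₂ (GRel x σ') (GCtx.zeroUsage Γ z ns) (GCtx.zeroUsage Γ' z ns) := by
  induction h with
  | nil => exact .nil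
  | cons r _ ih =>
    simp only [GCtx.zeroUsage, List.map_cons] at *
    refine .cons ?_ ih
    rcases r with rfl | ⟨rfl, rfl⟩ | ⟨rfl, rfl⟩
    · exact Or.inl rfl
    · right; left
      constructor
      · rfl
      · by_cases hz : x = z <;> simp [hz, LCtx.removeNames]
    · right; right
      constructor
      · by_cases hz : x = z <;> simp [hz, LCtx.removeNames]
      · rfl

theorem typed_rel {x : Name} {σ' : Ty} {Γ : GCtx} {Δ : LCtx} {e : Expr} {σ : Ty}
    (h : Typed Γ Δ e σ) :
    ∀ {Γ' : GCtx}, List.Forall₂ (GRel x σ') Γ Γ' → Typed Γ' Δ e σ := by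
  induction h using Typed.rec
    (motive_2 := fun Γ Δ e σ Δs _ =>
      ∀ {Γ' : GCtx}, List.Forall₂ (GRel x σ') Γ Γ' → TypedWHNF Γ' Δ e σ Δs)
    (motive_3 := fun Γ args Δs _ =>
      ∀ {Γ' : GCtx}, List.Forall₂ (GRel x σ') Γ Γ' → ArgsTyped Γ' args Δs)
    (motive_4 := fun Γ Δ ρ e z Δs σ φ m _ =>
      ∀ {Γ' : GCtx}, List.Forall₂ (GRel x σ') Γ Γ' → TypedAlt Γ' Δ ρ e z Δs σ φ m) with
  | var1 Γ y τ =>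
    intro Γ' h
    exact .var1 Γ' y τ
  | varw hm =>
    intro Γ' h
    obtain ⟨g', hg', hr⟩ := rel_mem h hm
    rcases hr with rfl | ⟨h1, rfl⟩ | ⟨h1, _⟩
    · exact .varw hg'
    · cases h1; exact .vard hg'
    · cases h1
  | vard hm =>
    intro Γ' h
    obtain ⟨g', hg', hr⟩ := rel_mem h hm
    rcases hr with rfl | ⟨h1, _⟩ | ⟨h1, rfl⟩
    · exact .vard hg'
    · cases h1
    · cases h1; exact .varw hg'
  | split en K n htag _ ih =>
    intro Γ' h
    exact .split en K n htag (ih h)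
  | lamI1 _ ih => intro Γ' h; exact .lamI1 (ih h)
  | lamIw _ ih => intro Γ' h; exact .lamIw (ih (rel_append h _))
  | lamIp _ ih => intro Γ' h; exact .lamIp (ih h)
  | appE1 _ _ ih1 ih2 => intro Γ' h; exact .appE1 (ih1 h) (ih2 h)
  | appEw _ _ ih1 ih2 => intro Γ' h; exact .appEw (ih1 h) (ih2 h)
  | appEp _ _ ih1 ih2 => intro Γ' h; exact .appEp (ih1 h) (ih2 h)
  | mlamI _ ih => intro Γ' h; exact .mlamI (ih (rel_append h _))
  | mappE _ hwf ih => intro Γ' h; exact .mappE (ih h) (multwf_rel h hwf)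
  | unitI => intro Γ' h; exact .unitI
  | pairI _ _ ih1 ih2 => intro Γ' h; exact .pairI (ih1 h) (ih2 h)
  | lett _ _ ih1 ih2 => intro Γ' h; exact .lett (ih1 h) (ih2 (rel_append h _))
  | letrec hΔ _ _ ih1 ih2 =>
    intro Γ' h
    exact .letrec hΔ (fun b hb => ih1 b hb (rel_append h _)) (ih2 (rel_append h _))
  | caseWHNF Δs hwhnf _ _ _ ihW ih1 ih2 =>
    intro Γ' h
    exact .caseWHNF Δs hwhnf (ihW h)
      (fun a ha hm => ih1 a ha hm (rel_append h _))
      (fun a ha hm => ih2 a ha hm (rel_append h _))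
  | caseNWHNF hn _ _ ihe ihA =>
    intro Γ' h
    exact .caseNWHNF hn (ihe h) (fun a ha => ihA a ha (rel_append h _))
  | lam _ ih => rename_i h; exact .lam (ih h)
  | con _ ih => rename_i h; exact .con (ih h)
  | nil => exact .nil
  | unr _ _ ih1 ih2 => rename_i h; exact .unr (ih1 h) (ih2 h)
  | lin _ _ ih1 ih2 => rename_i h; exact .lin (ih1 h) (ih2 h)
  | wild _ ih => rename_i h; exact .wild (ih h)
  | alt0 hf _ ih =>
    rename_i h
    exact .alt0 hf (ih (rel_append (zeroUsage_rel h _ _) _))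
  | altNwhnf h0 hl _ ih =>
    rename_i h
    exact .altNwhnf h0 hl (ih (rel_append (rel_append h _) _))
  | altNnwhnf h0 _ ih =>
    rename_i h
    exact .altNnwhnf h0 (ih (rel_append (rel_append h _) _))

/-- Unrestricted and Δ-bound: `Γ, x:ω σ'; Δ ⊢ e : σ` iff
`Γ, x:_∅ σ'; Δ ⊢ e : σ`. -/
theorem unrestricted_iff_empty_delta_bound
    (Γ : GCtx) (Δ : LCtx) (x : Name) (σ' σ : Ty) (e : Expr) :
    Typed (Γ ++ [GEntry.unr x σ']) Δ e σ ↔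
    Typed (Γ ++ [GEntry.dlt x [] σ']) Δ e σ := by
  constructor
  · intro h
    exact typed_rel h (List.rel_append (rel_refl_list x σ' Γ)
      (.cons (Or.inr (Or.inl ⟨rfl, rfl⟩)) .nil))
  · intro h
    exact typed_rel h (List.rel_append (rel_refl_list x σ' Γ)
      (.cons (Or.inr (Or.inr ⟨rfl, rfl⟩)) .nil))
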